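/- arXiv:1404.3845 — 4 statements merged into one kernel-verified Lean document; each statement's English description precedes it below -/
import Mathlib

section
/- For real numbers κ and λ, there exists t > 0 such that s_{κ,λ}(u) > 0 for all u ∈ (0, t] and s_{κ,λ}'(t) = 0 if and only if either (1) κ = 0 and λ = 0, or (2) κ < 0 and 0 < λ < √(−κ), or (3) κ > 0 and λ < 0. -/
/-- The solution `s_{κ,λ}` of the Jacobi equation `f'' + κ f = 0` with
`f(0) = 1`, `f'(0) = -λ`. -/
noncomputable def jacobiSol (κ l : ℝ) (t : ℝ) : ℝ :=
  if 0 < κ then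
    Real.cos (Real.sqrt κ * t) - (l / Real.sqrt κ) * Real.sin (Real.sqrt κ * t)
  else if κ = 0 then 1 - l * t
  else Real.cosh (Real.sqrt (-κ) * t) - (l / Real.sqrt (-κ)) * Real.sinh (Real.sqrt (-κ) * t)

/-- `s_{κ,λ}'` has a positive zero occurring while `s_{κ,λ}` is still positive
iff `κ = 0, λ = 0`, or `κ < 0, 0 < λ < √(-κ)`, or `κ > 0, λ < 0`. -/
theorem deriv_zero_iff (κ l : ℝ) :
    (∃ t : ℝ, 0 < t ∧ (∀ u : ℝ, 0 < u → u ≤ t → 0 < jacobiSol κ l u) ∧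
        deriv (jacobiSol κ l) t = 0) ↔
      (κ = 0 ∧ l = 0) ∨ (κ < 0 ∧ 0 < l ∧ l < Real.sqrt (-κ)) ∨ (0 < κ ∧ l < 0) := by
  rcases lt_trichotomy κ 0 with hκ | hκ | hκ
  · -- case κ < 0
    set ω := Real.sqrt (-κ) with hωdef
    have hω : 0 < ω := Real.sqrt_pos.mpr (by linarith)
    have hfun : jacobiSol κ l = fun t => Real.cosh (ω * t) - (l / ω) * Real.sinh (ω * t) := by
      funext t
      simp [jacobiSol, hκ.ne, not_lt.mpr hκ.le, hωdef]
    have hderiv : ∀ t : ℝ, HasDerivAt (jacobiSol κ l)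
        (ω * Real.sinh (ω * t) - l * Real.cosh (ω * t)) t := by
      intro t
      rw [hfun]
      have h1 : HasDerivAt (fun t : ℝ => ω * t) ω t := by
        simpa using (hasDerivAt_id t).const_mul ω
      have h2 := (Real.hasDerivAt_cosh (ω * t)).comp t h1
      have h3 := ((Real.hasDerivAt_sinh (ω * t)).comp t h1).const_mul (l / ω)
      have h4 := h2.sub h3
      refine h4.congr_deriv ?_
      field_simp
    have hd : ∀ t : ℝ, deriv (jacobiSol κ l) t
        = ω * Real.sinh (ω * t) - l * Real.cosh (ω * t) := fun t => (hderiv t).deriv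
    constructor
    · rintro ⟨t, ht, _, hdz⟩
      rw [hd] at hdz
      have hsp : 0 < Real.sinh (ω * t) := Real.sinh_pos_iff.mpr (by positivity)
      have hcp : 0 < Real.cosh (ω * t) := Real.cosh_pos _
      have hsc : Real.sinh (ω * t) < Real.cosh (ω * t) := by
        nlinarith [Real.cosh_sub_sinh (ω * t), Real.exp_pos (-(ω * t))]
      refine Or.inr (Or.inl ⟨hκ, ?_, ?_⟩) <;> nlinarith
    · rintro (⟨h0, _⟩ | ⟨_, hl0, hlω⟩ | ⟨h0, _⟩)
      · exact absurd h0 hκ.ne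
      · -- find the zero by IVT
        set g : ℝ → ℝ := fun x => ω * Real.sinh x - l * Real.cosh x with hg
        have hgc : Continuous g := by fun_prop
        set b : ℝ := l / (ω - l) + 1 with hb
        have hbpos : 0 < b := by
          have : 0 < l / (ω - l) := div_pos hl0 (by linarith)
          rw [hb]; linarith
        have hg0 : g 0 < 0 := by simp [hg]; nlinarith
        have hgb : 0 < g b := by
          have h1 : b < Real.sinh b := Real.self_lt_sinh_iff.mpr hbpos
          have h2 : Real.cosh b - Real.sinh b = Real.exp (-b) := Real.cosh_sub_sinh b
          have h3 : Real.exp (-b) ≤ 1 := Real.exp_le_one_iff.mpr (by linarith)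
          have hne : ω - l ≠ 0 := sub_ne_zero.mpr (ne_of_gt hlω)
          have h4 : (ω - l) * b = ω := by
            rw [hb]; field_simp; ring
          simp only [hg]
          nlinarith
        have hivt := intermediate_value_Ioo hbpos.le hgc.continuousOn
        have h0mem : (0 : ℝ) ∈ Set.Ioo (g 0) (g b) := ⟨hg0, hgb⟩
        obtain ⟨c, hc, hgc0⟩ := hivt h0mem
        refine ⟨c / ω, div_pos hc.1 hω, ?_, ?_⟩
        · intro u hu hut
          rw [hfun]
          have hsp : 0 < Real.sinh (ω * u) := Real.sinh_pos_iff.mpr (by positivity)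
          have hlω' : l / ω < 1 := (div_lt_one hω).mpr hlω
          have hlω'' : 0 < l / ω := div_pos hl0 hω
          have := Real.cosh_sub_sinh (ω * u)
          have := Real.exp_pos (-(ω * u))
          simp only
          nlinarith
        · rw [hd]
          have : ω * (c / ω) = c := by field_simp
          rw [this]
          exact hgc0
      · exact absurd h0 (not_lt.mpr hκ.le)
  · -- case κ = 0
    subst hκ
    have hfun : jacobiSol 0 l = fun t => 1 - l * t := by
      funext t
      simp [jacobiSol]
    have hderiv : ∀ t : ℝ, HasDerivAt (jacobiSol 0 l) (-l) t := by
      intro t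
      rw [hfun]
      have h1 : HasDerivAt (fun t : ℝ => l * t) l t := by
        simpa using (hasDerivAt_id t).const_mul l
      exact ((hasDerivAt_const t (1 : ℝ)).sub h1).congr_deriv (by ring)
    constructor
    · rintro ⟨t, ht, _, hdz⟩
      rw [(hderiv t).deriv] at hdz
      exact Or.inl ⟨rfl, by linarith⟩
    · rintro (⟨_, hl⟩ | ⟨h0, _⟩ | ⟨h0, _⟩)
      · subst hl
        refine ⟨1, one_pos, ?_, ?_⟩
        · intro u hu hut
          rw [hfun]
          simp
        · rw [(hderiv 1).deriv]; simp
      · exact absurd h0 (lt_irrefl 0)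
      · exact absurd h0 (lt_irrefl 0)
  · -- case 0 < κ
    set a := Real.sqrt κ with hadef
    have ha : 0 < a := Real.sqrt_pos.mpr hκ
    have hfun : jacobiSol κ l = fun t => Real.cos (a * t) - (l / a) * Real.sin (a * t) := by
      funext t
      simp [jacobiSol, hκ, hadef]
    have hderiv : ∀ t : ℝ, HasDerivAt (jacobiSol κ l)
        (-(a * Real.sin (a * t)) - l * Real.cos (a * t)) t := by
      intro t
      rw [hfun]
      have h1 : HasDerivAt (fun t : ℝ => a * t) a t := by
        simpa using (hasDerivAt_id t).const_mul a
      have h2 := (Real.hasDerivAt_cos (a * t)).comp t h1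
      have h3 := ((Real.hasDerivAt_sin (a * t)).comp t h1).const_mul (l / a)
      have h4 := h2.sub h3
      refine h4.congr_deriv ?_
      field_simp
    have hd : ∀ t : ℝ, deriv (jacobiSol κ l) t
        = -(a * Real.sin (a * t)) - l * Real.cos (a * t) := fun t => (hderiv t).deriv
    constructor
    · rintro ⟨t, ht, hpos, hdz⟩
      rw [hd] at hdz
      refine Or.inr (Or.inr ⟨hκ, ?_⟩)
      by_contra hl
      push_neg at hl
      have hge : Real.pi / 2 ≤ a * t := by
        by_contra hlt
        push_neg at hlt
        have hat : 0 < a * t := by positivity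
        have hs : 0 < Real.sin (a * t) :=
          Real.sin_pos_of_pos_of_lt_pi hat (by linarith [Real.pi_pos])
        have hc : 0 < Real.cos (a * t) :=
          Real.cos_pos_of_mem_Ioo ⟨by linarith [Real.pi_pos], hlt⟩
        nlinarith
      have hu : (0 : ℝ) < Real.pi / (2 * a) := by positivity
      have hut : Real.pi / (2 * a) ≤ t := by
        rw [div_le_iff₀ (by positivity)]
        nlinarith
      have := hpos _ hu hut
      rw [hfun] at this
      have hau : a * (Real.pi / (2 * a)) = Real.pi / 2 := by field_simp
      simp only [hau, Real.cos_pi_div_two, Real.sin_pi_div_two, mul_one, zero_sub] at this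
      have : l / a < 0 := by linarith
      exact absurd (div_nonneg hl ha.le) (not_le.mpr this)
    · rintro (⟨h0, _⟩ | ⟨h0, _⟩ | ⟨_, hl⟩)
      · exact absurd h0 hκ.ne'
      · exact absurd h0 (not_lt.mpr hκ.le)
      · set g : ℝ → ℝ := fun x => a * Real.sin x + l * Real.cos x with hg
        have hgc : Continuous g := by fun_prop
        have hg0 : g 0 < 0 := by simp [hg]; linarith
        have hgb : 0 < g (Real.pi / 2) := by
          simp [hg]
          linarith
        have hivt := intermediate_value_Ioo (by positivity : (0:ℝ) ≤ Real.pi / 2)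
          hgc.continuousOn
        obtain ⟨c, hc, hgc0⟩ := hivt (⟨hg0, hgb⟩ : (0:ℝ) ∈ Set.Ioo (g 0) (g (Real.pi / 2)))
        refine ⟨c / a, div_pos hc.1 ha, ?_, ?_⟩
        · intro u hu hut
          rw [hfun]
          have hau : a * u ≤ c := by
            rw [le_div_iff₀ ha] at hut
            linarith [hut]
          have haup : 0 < a * u := by positivity
          have hs : 0 < Real.sin (a * u) :=
            Real.sin_pos_of_pos_of_lt_pi haup (by linarith [hc.2, Real.pi_pos])
          have hcc : 0 < Real.cos (a * u) :=
            Real.cos_pos_of_mem_Ioo ⟨by linarith [Real.pi_pos], by linarith [hc.2]⟩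
          have hla : l / a < 0 := div_neg_of_neg_of_pos hl ha
          simp only
          nlinarith
        · rw [hd]
          have : a * (c / a) = c := by field_simp
          rw [this]
          simp only [hg] at hgc0
          linarith
end

section
/- Let n ≥ 2 be an integer and let κ, λ be real numbers such that either (κ < 0 and λ ≤ √(−κ)) or (κ = 0 and λ ≤ 0) (so that s_{κ,λ}(t) > 0 for all t ≥ 0). Then the following are equivalent: (a) there exists a real constant C such that for every t ≥ 0 the function u ↦ s_{κ,λ}(u)^{n−1} is integrable on [t, ∞) and ∫_t^∞ s_{κ,λ}(u)^{n−1} du ≤ C·s_{κ,λ}(t)^{n−1}; (b) κ < 0 and λ = √(−κ). Moreover, when κ < 0 and λ = √(−κ), for every t ≥ 0 one has ∫_t^∞ s_{κ,λ}(u)^{n−1} du = s_{κ,λ}(t)^{n−1}/((n−1)λ). -/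
open MeasureTheory Set Filter

lemma exp_tail (b t : ℝ) (hb : 0 < b) :
    IntegrableOn (fun u => Real.exp (-(b * u))) (Set.Ici t) ∧
      (∫ u in Set.Ici t, Real.exp (-(b * u))) = Real.exp (-(b * t)) / b := by
  have hint : IntegrableOn (fun u => Real.exp (-(b * u))) (Set.Ioi t) := by
    simpa [neg_mul] using exp_neg_integrableOn_Ioi t hb
  have hderiv : ∀ x ∈ Ici t, HasDerivAt (fun u => -(Real.exp (-(b * u)) / b))
      (Real.exp (-(b * x))) x := by
    intro x _
    have h1 : HasDerivAt (fun u : ℝ => -(b * u)) (-b) x := by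
      simpa using ((hasDerivAt_id x).const_mul b).fun_neg
    have h2 := (Real.hasDerivAt_exp (-(b * x))).comp x h1
    have h3 : HasDerivAt (fun u => -(Real.exp (-(b * u)) / b)) (-(Real.exp (-(b * x)) * -b / b)) x :=
      (h2.div_const b).fun_neg
    convert h3 using 1
    rw [mul_neg, neg_div, neg_neg, mul_div_assoc, div_self hb.ne', mul_one]
  have htend : Tendsto (fun u => -(Real.exp (-(b * u)) / b)) atTop (nhds 0) := by
    have h1 : Tendsto (fun u : ℝ => -(b * u)) atTop atBot :=
      tendsto_neg_atBot_iff.mpr (Tendsto.const_mul_atTop hb tendsto_id)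
    have := ((Real.tendsto_exp_atBot.comp h1).div_const b).neg
    simpa using this
  have hI := integral_Ioi_of_hasDerivAt_of_tendsto' hderiv hint htend
  constructor
  · rw [integrableOn_Ici_iff_integrableOn_Ioi]; exact hint
  · rw [integral_Ici_eq_integral_Ioi, hI]; ring

lemma not_int (f : ℝ → ℝ) (c : ℝ) (hc : 0 < c) (hf : IntegrableOn f (Set.Ici (0:ℝ)))
    (hle : ∀ u ∈ Set.Ici (0:ℝ), c ≤ f u) : False := by
  have : IntegrableOn (fun _ : ℝ => c) (Set.Ici (0:ℝ)) := by
    refine Integrable.mono hf aestronglyMeasurable_const ?_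
    filter_upwards [ae_restrict_mem measurableSet_Ici] with u hu
    have := hle u hu
    rw [Real.norm_eq_abs, Real.norm_eq_abs, abs_of_pos hc, abs_of_pos (hc.trans_le this)]
    exact this
  rw [integrableOn_const_iff] at this
  rcases this with h | h
  · exact hc.ne' (by simpa using h)
  · simp [Real.volume_Ici] at h


lemma jacobi_exp (κ : ℝ) (hκ : κ < 0) (t : ℝ) :
    jacobiSol κ (Real.sqrt (-κ)) t = Real.exp (-(Real.sqrt (-κ) * t)) := by
  have ha : (0:ℝ) < Real.sqrt (-κ) := Real.sqrt_pos.mpr (by linarith)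
  rw [jacobiSol, if_neg (by linarith), if_neg hκ.ne, div_self ha.ne', one_mul,
    Real.cosh_sub_sinh]

/-- When `κ, λ` do not satisfy the ball-condition (so `s_{κ,λ} > 0` on `[0,∞)`),
the constant `C(n,κ,λ,∞)` is finite iff `κ < 0` and `λ = √(-κ)`; in that case
`∫_t^∞ s_{κ,λ}^{n-1} = s_{κ,λ}(t)^{n-1}/((n-1)λ)` for all `t ≥ 0`. -/
theorem tail_integral_bound_iff (n : ℕ) (hn : 2 ≤ n) (κ l : ℝ)
    (h : (κ < 0 ∧ l ≤ Real.sqrt (-κ)) ∨ (κ = 0 ∧ l ≤ 0)) :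
    ((∃ C : ℝ, ∀ t : ℝ, 0 ≤ t →
        IntegrableOn (fun u => jacobiSol κ l u ^ (n - 1)) (Set.Ici t) ∧
        (∫ u in Set.Ici t, jacobiSol κ l u ^ (n - 1)) ≤ C * jacobiSol κ l t ^ (n - 1)) ↔
      (κ < 0 ∧ l = Real.sqrt (-κ))) ∧
    (κ < 0 → l = Real.sqrt (-κ) → ∀ t : ℝ, 0 ≤ t →
      (∫ u in Set.Ici t, jacobiSol κ l u ^ (n - 1)) =
        jacobiSol κ l t ^ (n - 1) / (((n : ℝ) - 1) * l)) := by
  have hcast : ((n - 1 : ℕ) : ℝ) = (n : ℝ) - 1 := by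
    rw [Nat.cast_sub (by omega)]; norm_num
  have hn1 : (0:ℝ) < (n : ℝ) - 1 := by
    have : (2:ℝ) ≤ n := by exact_mod_cast hn
    linarith
  -- key computation when κ < 0 and l = √(-κ)
  have key : ∀ (hκ : κ < 0) (hl : l = Real.sqrt (-κ)), ∀ t : ℝ,
      IntegrableOn (fun u => jacobiSol κ l u ^ (n - 1)) (Set.Ici t) ∧
      (∫ u in Set.Ici t, jacobiSol κ l u ^ (n - 1)) =
        jacobiSol κ l t ^ (n - 1) / (((n : ℝ) - 1) * l) := by
    intro hκ hl t
    have ha : (0:ℝ) < Real.sqrt (-κ) := Real.sqrt_pos.mpr (by linarith)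
    have hl0 : 0 < l := hl ▸ ha
    set b : ℝ := ((n : ℝ) - 1) * l with hb
    have hbpos : 0 < b := mul_pos hn1 hl0
    have hfun : ∀ u : ℝ, jacobiSol κ l u ^ (n - 1) = Real.exp (-(b * u)) := by
      intro u
      rw [hl, jacobi_exp κ hκ, ← Real.exp_nat_mul, hcast, ← hl]
      ring_nf
      rw [hb]; ring_nf
    obtain ⟨hint, hval⟩ := exp_tail b t hbpos
    constructor
    · simpa only [hfun] using hint
    · simp only [hfun]
      rw [hval]
  constructor
  · constructor
    · rintro ⟨C, hC⟩
      -- show κ < 0 and l = √(-κ)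
      obtain ⟨hint0, _⟩ := hC 0 le_rfl
      rcases h with ⟨hκ, hl⟩ | ⟨hκ, hl⟩
      · refine ⟨hκ, ?_⟩
        by_contra hne
        have hlt : l < Real.sqrt (-κ) := lt_of_le_of_ne hl hne
        have ha : (0:ℝ) < Real.sqrt (-κ) := Real.sqrt_pos.mpr (by linarith)
        set c : ℝ := min 1 (1 - l / Real.sqrt (-κ)) with hc
        have hcpos : 0 < c := lt_min one_pos (by
          have : l / Real.sqrt (-κ) < 1 := (div_lt_one ha).mpr hlt
          linarith)
        refine not_int (fun u => jacobiSol κ l u ^ (n - 1)) (c ^ (n - 1))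
          (pow_pos hcpos _) hint0 ?_
        intro u hu
        refine pow_le_pow_left₀ hcpos.le ?_ _
        rw [jacobiSol, if_neg (by linarith), if_neg hκ.ne]
        have hsinh : 0 ≤ Real.sinh (Real.sqrt (-κ) * u) :=
          Real.sinh_nonneg_iff.mpr (mul_nonneg ha.le hu)
        have hsc : Real.sinh (Real.sqrt (-κ) * u) ≤ Real.cosh (Real.sqrt (-κ) * u) := by
          nlinarith [Real.cosh_sub_sinh (Real.sqrt (-κ) * u),
            Real.exp_pos (-(Real.sqrt (-κ) * u))]
        have hcosh : 1 ≤ Real.cosh (Real.sqrt (-κ) * u) := Real.one_le_cosh _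
        rcases le_or_gt l 0 with hl0 | hl0
        · have : 0 ≤ -(l / Real.sqrt (-κ)) * Real.sinh (Real.sqrt (-κ) * u) := by
            apply mul_nonneg _ hsinh
            simp only [neg_nonneg]
            exact div_nonpos_of_nonpos_of_nonneg hl0 ha.le
          calc c ≤ 1 := min_le_left _ _
            _ ≤ _ := by nlinarith
        · have hd : 0 < l / Real.sqrt (-κ) := div_pos hl0 ha
          have hd1 : l / Real.sqrt (-κ) < 1 := (div_lt_one ha).mpr hlt
          calc c ≤ 1 - l / Real.sqrt (-κ) := min_le_right _ _
            _ ≤ _ := by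
              nlinarith [mul_nonneg (sub_nonneg.mpr hd1.le) (sub_nonneg.mpr hcosh),
                mul_nonneg hd.le (sub_nonneg.mpr hsc)]
      · exfalso
        refine not_int (fun u => jacobiSol κ l u ^ (n - 1)) 1 one_pos hint0 ?_
        intro u hu
        have h1 : (1:ℝ) ≤ jacobiSol κ l u := by
          subst hκ
          simp only [jacobiSol, lt_self_iff_false, if_false, if_true, if_pos rfl]
          nlinarith [mul_nonpos_of_nonpos_of_nonneg hl hu]
        simpa using pow_le_pow_left₀ zero_le_one h1 (n - 1)
    · rintro ⟨hκ, hl⟩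
      refine ⟨1 / (((n : ℝ) - 1) * l), fun t ht => ?_⟩
      obtain ⟨hint, hval⟩ := key hκ hl t
      refine ⟨hint, ?_⟩
      rw [hval]
      rw [div_eq_mul_inv, one_div, mul_comm _ (jacobiSol κ l t ^ (n - 1)), mul_comm]
  · intro hκ hl t _
    exact (key hκ hl t).2
end

section
/- Let n ≥ 2 be an integer, let λ > 0, let κ = −λ², let a := (n−1)λ, and let D > 0 be a real number. Then sup over t ∈ (0, D) of (∫_t^D s_{κ,λ}(u)^{n−1} du)·(∫_0^t s_{κ,λ}(u)^{1−n} du) equals (1 − e^{−aD/2})²/a². Consequently, the constant μ̄_{n,κ,λ,D} := (4·sup_{t ∈ (0,D)} (∫_t^D s_{κ,λ}(u)^{n−1} du)(∫_0^t s_{κ,λ}(u)^{1−n} du))^{−1} equals ((n−1)λ/2)²·(1 − e^{−(n−1)λD/2})^{−2}. -/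
open intervalIntegral

lemma exp_zpow_aux (x : ℝ) (m : ℤ) : Real.exp x ^ m = Real.exp (m * x) := by
  rw [← Real.rpow_intCast, Real.rpow_def_of_pos (Real.exp_pos x), Real.log_exp, mul_comm]

lemma int_exp_aux (c : ℝ) (hc : c ≠ 0) (t D : ℝ) :
    ∫ u in t..D, Real.exp (c * u) = (Real.exp (c * D) - Real.exp (c * t)) / c := by
  rw [intervalIntegral.integral_comp_mul_left (fun x => Real.exp x) hc,
    integral_exp, smul_eq_mul]
  ring

/-- For `κ = -λ²`, `λ > 0`, `a = (n-1)λ` and `D > 0`: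
`sup_{t ∈ (0,D)} (∫_t^D s^{n-1})(∫_0^t s^{1-n}) = (1 - e^{-aD/2})²/a²`, and
hence Kasue's constant `μ̄_{n,κ,λ,D}` equals
`((n-1)λ/2)² (1 - e^{-(n-1)λD/2})⁻²`. -/
theorem kasue_constant_eq (n : ℕ) (hn : 2 ≤ n) (l : ℝ) (hl : 0 < l) (κ : ℝ)
    (hκ : κ = -l ^ 2) (a : ℝ) (ha : a = ((n : ℝ) - 1) * l) (D : ℝ) (hD : 0 < D) :
    sSup ((fun t : ℝ =>
        (∫ u in t..D, jacobiSol κ l u ^ (n - 1)) *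
          (∫ u in (0 : ℝ)..t, jacobiSol κ l u ^ ((1 : ℤ) - (n : ℤ)))) ''
      Set.Ioo 0 D) =
      (1 - Real.exp (-(a * D) / 2)) ^ 2 / a ^ 2 ∧
    (4 * sSup ((fun t : ℝ =>
        (∫ u in t..D, jacobiSol κ l u ^ (n - 1)) *
          (∫ u in (0 : ℝ)..t, jacobiSol κ l u ^ ((1 : ℤ) - (n : ℤ)))) ''
      Set.Ioo 0 D))⁻¹ =
      (((n : ℝ) - 1) * l / 2) ^ 2 *
        ((1 - Real.exp (-(((n : ℝ) - 1) * l * D) / 2))⁻¹) ^ 2 := by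
  have hn1 : (1:ℝ) ≤ (n:ℝ) - 1 := by
    have : (2:ℝ) ≤ (n:ℝ) := by exact_mod_cast hn
    linarith
  have hA : 0 < a := by rw [ha]; nlinarith
  have hjac : ∀ u : ℝ, jacobiSol κ l u = Real.exp (-(l * u)) := by
    intro u
    rw [jacobiSol, if_neg (by nlinarith), if_neg (by nlinarith)]
    rw [hκ, neg_neg, Real.sqrt_sq hl.le, div_self hl.ne', one_mul, Real.cosh_sub_sinh]
  have hcast : ((n - 1 : ℕ) : ℝ) = (n:ℝ) - 1 := by
    have : 1 ≤ n := by omega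
    push_cast [this]; ring
  have key : ∀ t : ℝ,
      (∫ u in t..D, jacobiSol κ l u ^ (n - 1)) *
        (∫ u in (0 : ℝ)..t, jacobiSol κ l u ^ ((1 : ℤ) - (n : ℤ))) =
      (Real.exp (-a * t) - Real.exp (-a * D)) * (Real.exp (a * t) - 1) / a ^ 2 := by
    intro t
    have e1 : ∀ u : ℝ, jacobiSol κ l u ^ (n - 1) = Real.exp (-a * u) := by
      intro u
      rw [hjac, ← Real.exp_nat_mul, hcast]
      congr 1; rw [ha]; ring
    have e2 : ∀ u : ℝ, jacobiSol κ l u ^ ((1 : ℤ) - (n : ℤ)) = Real.exp (a * u) := by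
      intro u
      rw [hjac, exp_zpow_aux]
      congr 1; push_cast; rw [ha]; ring
    simp_rw [e1, e2, int_exp_aux (-a) (neg_ne_zero.mpr hA.ne'), int_exp_aux a hA.ne']
    rw [mul_zero, Real.exp_zero]
    field_simp
    ring
  set E := Real.exp (-(a * D) / 2) with hE
  have hE1 : E < 1 := Real.exp_lt_one_iff.mpr (by nlinarith)
  have hEpos : 0 < E := Real.exp_pos _
  have hEsq : Real.exp (-a * D) = E ^ 2 := by
    rw [hE, sq, ← Real.exp_add]; congr 1; ring
  have hval : (fun t : ℝ =>
      (∫ u in t..D, jacobiSol κ l u ^ (n - 1)) *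
        (∫ u in (0 : ℝ)..t, jacobiSol κ l u ^ ((1 : ℤ) - (n : ℤ)))) (D/2)
      = (1 - E) ^ 2 / a ^ 2 := by
    simp only [key]
    have h1 : Real.exp (-a * (D/2)) = E := by rw [hE]; congr 1; ring
    have h2 : Real.exp (a * (D/2)) * E = 1 := by
      rw [hE, ← Real.exp_add, show a * (D/2) + -(a*D)/2 = 0 by ring, Real.exp_zero]
    rw [h1, hEsq]
    congr 1
    linear_combination (1 - E) * h2
  have hub : ∀ v ∈ ((fun t : ℝ =>
      (∫ u in t..D, jacobiSol κ l u ^ (n - 1)) *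
        (∫ u in (0 : ℝ)..t, jacobiSol κ l u ^ ((1 : ℤ) - (n : ℤ)))) '' Set.Ioo 0 D),
      v ≤ (1 - E) ^ 2 / a ^ 2 := by
    rintro v ⟨t, _, rfl⟩
    simp only [key]
    apply div_le_div_of_nonneg_right ?_ (by positivity)
    have hpq : Real.exp (-a * t) * Real.exp (a * t) = 1 := by
      rw [← Real.exp_add, show -a * t + a * t = 0 by ring, Real.exp_zero]
    have hu : Real.exp (-a * t) = Real.exp (-(a * t) / 2) ^ 2 := by
      rw [sq, ← Real.exp_add]; congr 1; ring
    have hv : Real.exp (a * t) = Real.exp ((a * t) / 2) ^ 2 := by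
      rw [sq, ← Real.exp_add]; congr 1; ring
    have huv : Real.exp (-(a * t) / 2) * Real.exp ((a * t) / 2) = 1 := by
      rw [← Real.exp_add, show -(a * t)/2 + (a*t)/2 = 0 by ring, Real.exp_zero]
    have h3 : 2 * E ≤ Real.exp (-a * t) + E ^ 2 * Real.exp (a * t) := by
      nlinarith [sq_nonneg (Real.exp (-(a * t) / 2) - E * Real.exp ((a * t) / 2)), huv, hu, hv,
        hEpos.le]
    nlinarith [hpq, h3, hEsq]
  have hmem : (1 - E) ^ 2 / a ^ 2 ∈ ((fun t : ℝ =>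
      (∫ u in t..D, jacobiSol κ l u ^ (n - 1)) *
        (∫ u in (0 : ℝ)..t, jacobiSol κ l u ^ ((1 : ℤ) - (n : ℤ)))) '' Set.Ioo 0 D) :=
    ⟨D/2, ⟨by linarith, by linarith⟩, hval⟩
  have hsup : sSup ((fun t : ℝ =>
      (∫ u in t..D, jacobiSol κ l u ^ (n - 1)) *
        (∫ u in (0 : ℝ)..t, jacobiSol κ l u ^ ((1 : ℤ) - (n : ℤ)))) '' Set.Ioo 0 D)
      = (1 - E) ^ 2 / a ^ 2 := IsGreatest.csSup_eq ⟨hmem, hub⟩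
  refine ⟨hsup, ?_⟩
  rw [hsup, ← ha, ← hE]
  have h1E : (0:ℝ) < 1 - E := by linarith
  field_simp
  ring
end

section
/- Let X be a proper metric space such that every two points x, y ∈ X are joined by a minimal geodesic, i.e. there exists a map f : [0, dist(x, y)] → X with f(0) = x, f(dist(x, y)) = y, and dist(f(s), f(t)) = |s − t| for all s, t ∈ [0, dist(x, y)]. Let γ : [0, ∞) → X be a ray and let p ∈ X. Then there exists a ray σ : [0, ∞) → X with σ(0) = p such that for every t ≥ 0, b_γ(σ(t)) = b_γ(p) + t, where b_γ(q) denotes the limit of s − dist(q, γ(s)) as s → ∞ (which exists for every q ∈ X). -/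
open Filter

/-- In a proper geodesic metric space, for any ray `γ` and point `p` there is
an asymptote: a ray `σ` starting at `p` along which the Busemann function of
`γ` grows linearly with unit speed. -/
theorem exists_asymptote {X : Type*} [MetricSpace X] [ProperSpace X]
    (hgeo : ∀ x y : X, ∃ f : ℝ → X, f 0 = x ∧ f (dist x y) = y ∧
      ∀ s t : ℝ, 0 ≤ s → s ≤ dist x y → 0 ≤ t → t ≤ dist x y →
        dist (f s) (f t) = |s - t|)
    (γ : ℝ → X)
    (hray : ∀ s t : ℝ, 0 ≤ s → 0 ≤ t → dist (γ s) (γ t) = |s - t|)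
    (p : X) (b : X → ℝ)
    (hb : ∀ q : X, Tendsto (fun s : ℝ => s - dist q (γ s)) atTop (nhds (b q))) :
    ∃ σ : ℝ → X, σ 0 = p ∧
      (∀ s t : ℝ, 0 ≤ s → 0 ≤ t → dist (σ s) (σ t) = |s - t|) ∧
      ∀ t : ℝ, 0 ≤ t → b (σ t) = b p + t := by
  classical
  -- b is 1-Lipschitz
  have hblip : ∀ q q' : X, b q ≤ b q' + dist q q' := by
    intro q q'
    have h1 : Tendsto (fun s : ℝ => (s - dist q' (γ s)) + dist q q') atTop
        (nhds (b q' + dist q q')) := (hb q').add_const _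
    refine le_of_tendsto_of_tendsto' (hb q) h1 ?_
    intro s
    have : dist q' (γ s) ≤ dist q' q + dist q (γ s) := dist_triangle _ _ _
    have : dist q' (γ s) - dist q q' ≤ dist q (γ s) := by
      rw [dist_comm q q']; linarith
    linarith
  have hbcont : Continuous b := by
    refine (LipschitzWith.of_dist_le_mul (K := 1) fun x y => ?_).continuous
    simp only [NNReal.coe_one, one_mul, Real.dist_eq]
    have h1 := hblip x y
    have h2 := hblip y x
    rw [dist_comm y x] at h2
    rw [abs_sub_le_iff]
    constructor <;> linarith
  -- Busemann value along the ray
  have hbγ : ∀ r : ℝ, 0 ≤ r → b (γ r) = r := by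
    intro r hr
    refine tendsto_nhds_unique (hb (γ r)) ?_
    refine Tendsto.congr' ?_ tendsto_const_nhds
    filter_upwards [eventually_ge_atTop r, eventually_ge_atTop (0 : ℝ)] with s hs hs0
    rw [hray r s hr hs0, abs_of_nonpos (by linarith)]
    ring
  -- choose geodesics from p to γ n
  choose f hf0 hfd hfiso using fun n : ℕ => hgeo p (γ (n : ℝ))
  set d : ℕ → ℝ := fun n => dist p (γ (n : ℝ)) with hdd
  have hd0 : ∀ n, (0 : ℝ) ≤ d n := fun n => dist_nonneg
  set g : ℕ → ℝ → X := fun n t => f n (min t (d n)) with hg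
  -- distance from p along the geodesic
  have hdistp : ∀ (n : ℕ) (t : ℝ), 0 ≤ t → dist p (g n t) = min t (d n) := by
    intro n t ht
    have h1 : (0 : ℝ) ≤ min t (d n) := le_min ht (hd0 n)
    have h2 : min t (d n) ≤ d n := min_le_right _ _
    have h := hfiso n 0 (min t (d n)) le_rfl (hd0 n) h1 h2
    rw [hf0 n] at h
    rw [show dist p (g n t) = dist p (f n (min t (d n))) from rfl, h,
      zero_sub, abs_neg, abs_of_nonneg h1]
  -- n - d n → b p
  have hnat : Tendsto (fun n : ℕ => ((n : ℝ) - d n)) atTop (nhds (b p)) :=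
    (hb p).comp tendsto_natCast_atTop_atTop
  -- d n → ∞
  have hdtop : Tendsto d atTop atTop := by
    have h1 : Tendsto (fun n : ℕ => (n : ℝ) - (b p + 1)) atTop atTop :=
      tendsto_atTop_add_const_right _ _ tendsto_natCast_atTop_atTop
    refine tendsto_atTop_mono' _ ?_ h1
    filter_upwards [hnat.eventually (gt_mem_nhds (lt_add_one (b p)))] with n hn
    linarith
  -- eventually d n ≥ t
  have hev : ∀ t : ℝ, ∀ᶠ n in (atTop : Filter ℕ), t ≤ d n :=
    fun t => hdtop.eventually_ge_atTop t
  -- ultrafilter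
  obtain ⟨U, hU⟩ := Ultrafilter.exists_le (atTop : Filter ℕ)
  -- limits exist along U
  have key : ∀ t : ℝ, 0 ≤ t → ∃ a : X, Tendsto (fun n => g n t) (U : Filter ℕ) (nhds a) := by
    intro t ht
    have hc : IsCompact (Metric.closedBall p t) := isCompact_closedBall p t
    have hmem : ∀ n, g n t ∈ Metric.closedBall p t := by
      intro n
      rw [Metric.mem_closedBall, dist_comm, hdistp n t ht]
      exact min_le_left _ _
    have hle : (Ultrafilter.map (fun n => g n t) U : Filter X) ≤ 𝓟 (Metric.closedBall p t) := by
      rw [le_principal_iff]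
      exact mem_map.mpr (univ_mem' hmem)
    obtain ⟨a, _, ha⟩ := hc.ultrafilter_le_nhds (Ultrafilter.map (fun n => g n t) U) hle
    exact ⟨a, ha⟩
  choose σ' hσ' using key
  set σ : ℝ → X := fun t => if h : 0 ≤ t then σ' t h else p with hσdef
  have hσt : ∀ t (ht : 0 ≤ t), Tendsto (fun n => g n t) (U : Filter ℕ) (nhds (σ t)) := by
    intro t ht
    simpa [hσdef, dif_pos ht] using hσ' t ht
  refine ⟨σ, ?_, ?_, ?_⟩
  · -- σ 0 = p
    refine tendsto_nhds_unique (hσt 0 le_rfl) ?_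
    have : ∀ n, g n 0 = p := by
      intro n
      have : min (0 : ℝ) (d n) = 0 := min_eq_left (hd0 n)
      simp only [hg, this, hf0 n]
    exact Tendsto.congr (fun n => (this n).symm) tendsto_const_nhds
  · -- isometry
    intro s t hs ht
    have h1 : Tendsto (fun n => dist (g n s) (g n t)) (U : Filter ℕ)
        (nhds (dist (σ s) (σ t))) := (hσt s hs).dist (hσt t ht)
    refine tendsto_nhds_unique h1 ?_
    refine Tendsto.congr' ?_ tendsto_const_nhds
    have : ∀ᶠ n in (atTop : Filter ℕ), dist (g n s) (g n t) = |s - t| := by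
      filter_upwards [hev s, hev t] with n hns hnt
      have h2 : min s (d n) = s := min_eq_left hns
      have h3 : min t (d n) = t := min_eq_left hnt
      simp only [hg, h2, h3]
      exact hfiso n s t hs hns ht hnt
    have h6 : (fun n => dist (g n s) (g n t)) =ᶠ[(U : Filter ℕ)] (fun _ => |s - t|) := hU this
    exact h6.symm
  · -- Busemann growth
    intro t ht
    have h1 : Tendsto (fun n => b (g n t)) (U : Filter ℕ) (nhds (b (σ t))) :=
      (hbcont.tendsto _).comp (hσt t ht)
    refine tendsto_nhds_unique h1 ?_
    have h2 : Tendsto (fun n : ℕ => ((n : ℝ) - d n) + t) atTop (nhds (b p + t)) :=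
      hnat.add_const t
    have hupper : ∀ n, b (g n t) ≤ b p + t := by
      intro n
      have := hblip (g n t) p
      rw [dist_comm, hdistp n t ht] at this
      have := min_le_left t (d n)
      linarith [hblip (g n t) p, hdistp n t ht, min_le_left t (d n)]
    have hlower : ∀ᶠ n : ℕ in atTop, ((n : ℝ) - d n) + t ≤ b (g n t) := by
      filter_upwards [hev t] with n hn
      have h3 : min t (d n) = t := min_eq_left hn
      have h4 : dist (g n t) (γ (n : ℝ)) = d n - t := by
        have h := hfiso n t (d n) ht hn (hd0 n) le_rfl
        rw [hfd n] at h
        have hgnt : g n t = f n t := by simp only [hg]; rw [h3]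
        rw [hgnt, h, abs_of_nonpos (by linarith : t - d n ≤ 0)]
        ring
      have h5 := hblip (γ (n : ℝ)) (g n t)
      rw [dist_comm, h4, hbγ (n : ℝ) (Nat.cast_nonneg n)] at h5
      linarith
    have hseq : Tendsto (fun n : ℕ => b (g n t)) atTop (nhds (b p + t)) := by
      refine tendsto_of_tendsto_of_tendsto_of_le_of_le' h2 tendsto_const_nhds
        hlower (Eventually.of_forall hupper)
    exact hseq.mono_left hU
end
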